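/- Let q, z be complex numbers with |q| < 1 such that no factor 1 + z q^{2m+1} (m ≥ 0) vanishes. Then ν(z, −z; −q) = Σ_{n=0}^∞ (q^{n+1}; q)_∞ · q^n / (−z q^{2n+1}; q²)_∞. -/

import Mathlib

open scoped BigOperators

/-- The finite q-Pochhammer symbol `(a; q)_n = ∏_{m=0}^{n-1} (1 - a q^m)`. -/
noncomputable def qPoch (a q : ℂ) (n : ℕ) : ℂ := ∏ m ∈ Finset.range n, (1 - a * q ^ m)

/-- The infinite q-Pochhammer symbol `(a; q)_∞ = ∏_{m=0}^{∞} (1 - a q^m)`. -/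
noncomputable def qPochInf (a q : ℂ) : ℂ := ∏' m : ℕ, (1 - a * q ^ m)

/-- `ν(α, z; q) := Σ_{n=0}^∞ α^n q^{n²+n} / (-zq; q²)_{n+1}`. -/
noncomputable def nu (α z q : ℂ) : ℂ :=
  ∑' n : ℕ, α ^ n * q ^ (n ^ 2 + n) / qPoch (-z * q) (q ^ 2) (n + 1)

/-! Write `S(w) = ∑ qⁿ aₙ(w)`, `aₙ(w) = (q^{n+1};q)_∞ / (-w q^{2n+1};q²)_∞`, for the right-hand
side. Peeling one factor off each infinite product gives
`(1 - q^{n+1}) a_{n+1}(w) = (1 + w q^{2n+1}) aₙ(w)` and `aₙ(w q²) = (1 + w q^{2n+1}) aₙ(w)`; since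
`aₙ(w) → 1`, this makes `(1 + w q) S(w) - w q² S(w q²)` telescope to `1`. Iterating this functional
equation along `w = z q^{2n}` shows that the tails of `ν(z, z; q)` are
`z^n q^{n²+n} S(z q^{2n}) / (-zq;q²)_n`, which tend to `0` because `S(z q^{2n})` stays bounded.
Finally `ν(z, -z; -q) = ν(z, z; q)`. -/

open Filter Topology

theorem eq_sub_of_hasSum_sub_succ {G : Type*} [AddCommGroup G] [TopologicalSpace G]
    [IsTopologicalAddGroup G] [T2Space G] {f : ℕ → G} {s l : G}
    (hs : HasSum (fun n => f n - f (n + 1)) s) (hf : Tendsto f atTop (𝓝 l)) : s = f 0 - l :=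
  tendsto_nhds_unique (by simpa only [Finset.sum_range_sub'] using hs.tendsto_sum_nat)
    (tendsto_const_nhds.sub hf)

theorem summable_pow_mul_of_tendsto {𝕜 : Type*} [NormedField 𝕜] [CompleteSpace 𝕜]
    {u a : ℕ → 𝕜} {v l : 𝕜} (hu : Tendsto u atTop (𝓝 v)) (hv : ‖v‖ < 1)
    (ha : Tendsto a atTop (𝓝 l)) : Summable fun n => u n ^ n * a n := by
  obtain ⟨r, hvr, hr1⟩ := exists_between hv
  have hr0 : 0 ≤ r := (norm_nonneg v).trans hvr.le
  refine .of_norm_bounded_eventually_nat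
    ((summable_geometric_of_lt_one hr0 hr1).mul_right (‖l‖ + 1)) ?_
  filter_upwards [hu.norm.eventually_le_const hvr, ha.norm.eventually_le_const (lt_add_one _)]
    with n hun han
  rw [norm_mul, norm_pow]
  exact mul_le_mul (pow_le_pow_left₀ (norm_nonneg _) hun n) han (norm_nonneg _) (pow_nonneg hr0 n)

theorem tendsto_mul_pow_atTop_nhds_zero {R : Type*} [NormedRing R] {q : R} (hq : ‖q‖ < 1)
    (c : R) {k : ℕ → ℕ} (hk : Tendsto k atTop atTop) :
    Tendsto (fun n => c * q ^ k n) atTop (𝓝 0) := by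
  simpa using ((tendsto_pow_atTop_nhds_zero_of_norm_lt_one hq).comp hk).const_mul c

section QPochhammer

variable {q : ℂ}

theorem norm_pow_two_lt_one (hq : ‖q‖ < 1) : ‖q ^ 2‖ < 1 := by
  rw [norm_pow]
  exact pow_lt_one₀ (norm_nonneg q) hq two_ne_zero

theorem summable_norm_mul_pow (hq : ‖q‖ < 1) (a : ℂ) : Summable fun m : ℕ => ‖a * q ^ m‖ := by
  simpa only [norm_mul, norm_pow] using
    (summable_geometric_of_lt_one (norm_nonneg q) hq).mul_left ‖a‖

theorem qPochInf_eq_tprod_one_add (a q : ℂ) : qPochInf a q = ∏' m : ℕ, (1 + -a * q ^ m) := by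
  simp only [qPochInf, neg_mul, ← sub_eq_add_neg]

theorem multipliable_one_sub_mul_pow (hq : ‖q‖ < 1) (a : ℂ) :
    Multipliable fun m : ℕ => 1 - a * q ^ m := by
  simpa only [neg_mul, ← sub_eq_add_neg] using
    multipliable_one_add_of_summable (summable_norm_mul_pow hq (-a))

theorem qPochInf_ne_zero (hq : ‖q‖ < 1) {a : ℂ} (ha : ∀ m : ℕ, 1 - a * q ^ m ≠ 0) :
    qPochInf a q ≠ 0 := by
  rw [qPochInf_eq_tprod_one_add]
  refine tprod_one_add_ne_zero_of_summable (fun m => ?_) (summable_norm_mul_pow hq (-a))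
  simpa only [neg_mul, ← sub_eq_add_neg] using ha m

theorem qPochInf_eq_one_sub_mul (hq : ‖q‖ < 1) (a : ℂ) :
    qPochInf a q = (1 - a) * qPochInf (a * q) q := by
  have hshift (m : ℕ) : 1 - a * q ^ (m + 1) = 1 - a * q * q ^ m := by ring
  have htail : Multipliable fun m : ℕ => 1 - a * q ^ (m + 1) := by
    simpa only [hshift] using multipliable_one_sub_mul_pow hq (a * q)
  rw [qPochInf, tprod_eq_zero_mul' (f := fun m => 1 - a * q ^ m) htail, qPochInf, pow_zero,
    mul_one]
  simp only [hshift]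

theorem tendsto_qPoch_qPochInf (hq : ‖q‖ < 1) (a : ℂ) :
    Tendsto (qPoch a q) atTop (𝓝 (qPochInf a q)) :=
  (multipliable_one_sub_mul_pow hq a).hasProd.tendsto_prod_nat

theorem tendsto_qPochInf_one (hq : ‖q‖ < 1) {a : ℕ → ℂ} (ha : Tendsto a atTop (𝓝 0)) :
    Tendsto (fun n => qPochInf (a n) q) atTop (𝓝 1) := by
  have hbound : ∀ᶠ n in atTop, ∀ m, ‖-a n * q ^ m‖ ≤ ‖q‖ ^ m := by
    filter_upwards [(tendsto_zero_iff_norm_tendsto_zero.1 ha).eventually_le_const one_pos]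
      with n hn m
    rw [norm_mul, norm_neg, norm_pow]
    exact mul_le_of_le_one_left (by positivity) hn
  simpa only [qPochInf_eq_tprod_one_add, add_zero, tprod_one] using
    tendsto_tprod_one_add_of_dominated_convergence (g := fun _ => 0)
      (summable_geometric_of_lt_one (norm_nonneg q) hq)
      (fun m => by simpa using ha.neg.mul_const (q ^ m)) hbound

theorem tendsto_qPochInf_pow_succ (hq : ‖q‖ < 1) :
    Tendsto (fun n : ℕ => qPochInf (q ^ (n + 1)) q) atTop (𝓝 1) :=
  tendsto_qPochInf_one hq
    (by simpa using tendsto_mul_pow_atTop_nhds_zero hq 1 (tendsto_add_atTop_nat 1))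

theorem tendsto_qPochInf_neg_mul_pow_odd (hq : ‖q‖ < 1) (w : ℂ) :
    Tendsto (fun n : ℕ => qPochInf (-w * q ^ (2 * n + 1)) (q ^ 2)) atTop (𝓝 1) :=
  tendsto_qPochInf_one (norm_pow_two_lt_one hq) (tendsto_mul_pow_atTop_nhds_zero hq (-w)
    (tendsto_atTop_mono (fun n => (by omega : n ≤ 2 * n + 1)) tendsto_id))

end QPochhammer

noncomputable def pochRatio (q w : ℂ) (n : ℕ) : ℂ :=
  qPochInf (q ^ (n + 1)) q / qPochInf (-w * q ^ (2 * n + 1)) (q ^ 2)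

noncomputable def pochSeries (q w : ℂ) : ℂ := ∑' n : ℕ, q ^ n * pochRatio q w n

section PochSeries

variable {q w : ℂ}

theorem pochRatio_mul_pow_sq (w : ℂ) (j n : ℕ) :
    pochRatio q (w * q ^ (2 * j)) n
      = qPochInf (q ^ (n + 1)) q / qPochInf (-w * q ^ (2 * (n + j) + 1)) (q ^ 2) := by
  rw [pochRatio]
  ring_nf

theorem pochRatio_mul_sq (hq : ‖q‖ < 1) (n : ℕ) (hw : 1 + w * q ^ (2 * n + 1) ≠ 0) :
    pochRatio q (w * q ^ 2) n = (1 + w * q ^ (2 * n + 1)) * pochRatio q w n := by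
  have hD : qPochInf (-w * q ^ (2 * n + 1)) (q ^ 2)
      = (1 + w * q ^ (2 * n + 1)) * qPochInf (-w * q ^ (2 * (n + 1) + 1)) (q ^ 2) := by
    rw [qPochInf_eq_one_sub_mul (norm_pow_two_lt_one hq)]
    ring_nf
  simpa only [pochRatio, hD, mul_div_assoc', mul_div_mul_left _ _ hw] using
    pochRatio_mul_pow_sq (q := q) w 1 n

theorem one_sub_pow_mul_pochRatio_succ (hq : ‖q‖ < 1) (n : ℕ)
    (hw : 1 + w * q ^ (2 * n + 1) ≠ 0) :
    (1 - q ^ (n + 1)) * pochRatio q w (n + 1) = (1 + w * q ^ (2 * n + 1)) * pochRatio q w n := by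
  have hC : qPochInf (q ^ (n + 1)) q = (1 - q ^ (n + 1)) * qPochInf (q ^ (n + 1 + 1)) q := by
    rw [qPochInf_eq_one_sub_mul hq, ← pow_succ]
  have hshift := pochRatio_mul_pow_sq (q := q) w 1 n
  rw [mul_one] at hshift
  rw [← pochRatio_mul_sq hq n hw, hshift, pochRatio, hC, mul_div_assoc]

theorem tendsto_pochRatio (hq : ‖q‖ < 1) (w : ℂ) : Tendsto (pochRatio q w) atTop (𝓝 1) :=
  div_one (1 : ℂ) ▸
    (tendsto_qPochInf_pow_succ hq).div (tendsto_qPochInf_neg_mul_pow_odd hq w) one_ne_zero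

theorem summable_pow_mul_pochRatio (hq : ‖q‖ < 1) (w : ℂ) :
    Summable fun n => q ^ n * pochRatio q w n :=
  summable_pow_mul_of_tendsto tendsto_const_nhds hq (tendsto_pochRatio hq w)

theorem one_add_mul_pochSeries (hq : ‖q‖ < 1) (hw : ∀ m : ℕ, 1 + w * q ^ (2 * m + 1) ≠ 0) :
    (1 + w * q) * pochSeries q w = 1 + w * q ^ 2 * pochSeries q (w * q ^ 2) := by
  set g : ℕ → ℂ := fun n => -((1 - q ^ n) * (1 - w * q ^ (n + 1)) * pochRatio q w n)
  have hg : Tendsto g atTop (𝓝 (-1)) := by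
    have h1 := tendsto_pow_atTop_nhds_zero_of_norm_lt_one hq
    have h2 := tendsto_mul_pow_atTop_nhds_zero hq w (tendsto_add_atTop_nat 1)
    convert (((tendsto_const_nhds (x := (1 : ℂ))).sub h1).mul
      ((tendsto_const_nhds (x := (1 : ℂ))).sub h2)).mul (tendsto_pochRatio hq w) |>.neg using 2
    norm_num
  have hdiff (n : ℕ) : q ^ n * pochRatio q w n * (1 + w * q)
      - q ^ n * pochRatio q (w * q ^ 2) n * (w * q ^ 2) = g n - g (n + 1) := by
    rw [pochRatio_mul_sq hq n (hw n)]
    linear_combination -(1 - w * q ^ (n + 2)) * one_sub_pow_mul_pochRatio_succ hq n (hw n)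
  have hsum := ((summable_pow_mul_pochRatio hq w).hasSum.mul_right (1 + w * q)).sub
    ((summable_pow_mul_pochRatio hq (w * q ^ 2)).hasSum.mul_right (w * q ^ 2))
  simp only [hdiff] at hsum
  rw [pochSeries, pochSeries]
  linear_combination eq_sub_of_hasSum_sub_succ hsum hg

theorem exists_norm_pochSeries_mul_pow_le (hq : ‖q‖ < 1) (w : ℂ) :
    ∃ B, ∀ j : ℕ, ‖pochSeries q (w * q ^ (2 * j))‖ ≤ B := by
  obtain ⟨M₁, hM₁⟩ := (tendsto_qPochInf_pow_succ hq).norm.bddAbove_range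
  obtain ⟨M₂, hM₂⟩ := ((tendsto_qPochInf_neg_mul_pow_odd hq w).inv₀ one_ne_zero).norm.bddAbove_range
  have hterm (j n : ℕ) : ‖q ^ n * pochRatio q (w * q ^ (2 * j)) n‖ ≤ ‖q‖ ^ n * (M₁ * M₂) := by
    rw [norm_mul, norm_pow, pochRatio_mul_pow_sq, div_eq_mul_inv]
    exact mul_le_mul_of_nonneg_left (norm_mul_le_of_le (hM₁ ⟨n, rfl⟩) (hM₂ ⟨n + j, rfl⟩))
      (by positivity)
  exact ⟨(1 - ‖q‖)⁻¹ * (M₁ * M₂), fun j => tsum_of_norm_bounded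
    ((hasSum_geometric_of_lt_one (norm_nonneg q) hq).mul_right _) (hterm j)⟩

end PochSeries

theorem nu_neg_neg (α z q : ℂ) : nu α (-z) (-q) = nu α z q := by
  have hpow (n : ℕ) : (-q) ^ (n ^ 2 + n) = q ^ (n ^ 2 + n) :=
    Even.neg_pow (by simpa [sq, ← Nat.mul_succ] using Nat.even_mul_succ_self n) q
  simp only [nu, hpow, neg_sq, neg_mul, mul_neg, neg_neg]

theorem qPoch_neg_mul_succ (z q : ℂ) (n : ℕ) :
    qPoch (-z * q) (q ^ 2) (n + 1) = qPoch (-z * q) (q ^ 2) n * (1 + z * q ^ (2 * n + 1)) := by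
  rw [qPoch, Finset.prod_range_succ, qPoch]
  ring

section Nu

variable {q z : ℂ}

theorem summable_pow_mul_pow_sq_add_mul (hq : ‖q‖ < 1) (z : ℂ) {c : ℕ → ℂ} {l : ℂ}
    (hc : Tendsto c atTop (𝓝 l)) : Summable fun n => z ^ n * q ^ (n ^ 2 + n) * c n := by
  have hterm (n : ℕ) : z ^ n * q ^ (n ^ 2 + n) = (z * q ^ (n + 1)) ^ n := by ring
  simp only [hterm]
  exact summable_pow_mul_of_tendsto
    (tendsto_mul_pow_atTop_nhds_zero hq z (tendsto_add_atTop_nat 1)) (by simp) hc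

theorem nu_eq_pochSeries (hq : ‖q‖ < 1) (h : ∀ m : ℕ, 1 + z * q ^ (2 * m + 1) ≠ 0) :
    nu z z q = pochSeries q z := by
  set P := qPoch (-z * q) (q ^ 2)
  set T : ℕ → ℂ := fun n => z ^ n * q ^ (n ^ 2 + n) / P n * pochSeries q (z * q ^ (2 * n))
  have hP : Tendsto P atTop (𝓝 (qPochInf (-z * q) (q ^ 2))) :=
    tendsto_qPoch_qPochInf (norm_pow_two_lt_one hq) _
  have hP0 : qPochInf (-z * q) (q ^ 2) ≠ 0 :=
    qPochInf_ne_zero (norm_pow_two_lt_one hq) fun m => by convert h m using 1; ring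
  have hstep (n : ℕ) : T n - T (n + 1) = z ^ n * q ^ (n ^ 2 + n) / P (n + 1) := by
    have hFE := one_add_mul_pochSeries (w := z * q ^ (2 * n)) hq fun m => by
      convert h (n + m) using 2; ring
    rw [show z * q ^ (2 * n) * q ^ 2 = z * q ^ (2 * (n + 1)) by ring] at hFE
    have hPsucc : P (n + 1) = P n * (1 + z * q ^ (2 * n + 1)) := qPoch_neg_mul_succ z q n
    have hPn : P n ≠ 0 := Finset.prod_ne_zero_iff.2 fun m _ => by convert h m using 1; ring
    simp only [T, hPsucc]
    field_simp [h n]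
    linear_combination z ^ n * q ^ (n ^ 2 + n) * hFE
  have hT : Tendsto T atTop (𝓝 0) := by
    obtain ⟨B, hB⟩ := exists_norm_pochSeries_mul_pow_le hq z
    have hR := (summable_pow_mul_pow_sq_add_mul hq z (hP.inv₀ hP0)).tendsto_atTop_zero
    exact hR.zero_mul_isBoundedUnder_le (isBoundedUnder_of ⟨B, hB⟩)
  have hb : HasSum (fun n => T n - T (n + 1)) (nu z z q) := by
    have hs := summable_pow_mul_pow_sq_add_mul hq z ((hP.comp (tendsto_add_atTop_nat 1)).inv₀ hP0)
    simp only [Function.comp_apply, ← div_eq_mul_inv] at hs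
    simp only [hstep]
    exact hs.hasSum
  simpa [T, P, qPoch] using eq_sub_of_hasSum_sub_succ hb hT

end Nu

theorem nu_alpha_eq_neg_z (q z : ℂ) (hq : ‖q‖ < 1)
    (h : ∀ m : ℕ, 1 + z * q ^ (2 * m + 1) ≠ 0) :
    nu z (-z) (-q)
      = ∑' n : ℕ, qPochInf (q ^ (n + 1)) q * q ^ n / qPochInf (-z * q ^ (2 * n + 1)) (q ^ 2) := by
  rw [nu_neg_neg, nu_eq_pochSeries hq h, pochSeries]
  exact tsum_congr fun n => by rw [pochRatio]; ring
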